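/- arXiv:2401.09609 — 8 statements merged into one kernel-verified Lean document; each statement's English description precedes it below -/
import Mathlib

section
/- Let D ⊆ ℝⁿ be a nonempty (possibly infinite) set of nonzero vectors and let L be a linear subspace of ℝⁿ. If pspan(D) = L, then there exists a finite subset C ⊆ D such that pspan(C) = L. -/
/-!
A real subspace `L` is finitely generated, say by `S`, so as a cone it is generated by the finite
set `S ∪ -S`. Each of these finitely many generators is a nonnegative combination of finitely
many elements of `D`; together these elements already positively span `L`.
-/

open scoped RealInnerProductSpace

noncomputable section

/-- The positive span of a set `D`: all finite nonnegative linear combinations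
of elements of `D`. -/
def pspan {E : Type*} [AddCommGroup E] [Module ℝ E] (D : Set E) : Set E :=
  {x | ∃ (k : ℕ) (d : Fin k → E) (c : Fin k → ℝ),
    (∀ i, d i ∈ D) ∧ (∀ i, 0 ≤ c i) ∧ x = ∑ i, c i • d i}

/-- The cosine measure of `D` relative to a subspace `L`:
`min` over unit vectors `u ∈ L` of `sup_{d ∈ D} ⟪u, d⟫ / ‖d‖`. -/
noncomputable def cmRel {E : Type*} [NormedAddCommGroup E] [InnerProductSpace ℝ E]
    (L : Submodule ℝ E) (D : Set E) : ℝ :=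
  sInf ((fun u => sSup ((fun d => ⟪u, d⟫ / ‖d‖) '' D)) '' {u : E | u ∈ L ∧ ‖u‖ = 1})

/-- The cosine vector set of `D` relative to a subspace `L`: the set of unit
vectors `u ∈ L` attaining the minimum defining `cmRel L D`. -/
noncomputable def cVRel {E : Type*} [NormedAddCommGroup E] [InnerProductSpace ℝ E]
    (L : Submodule ℝ E) (D : Set E) : Set E :=
  {u : E | u ∈ L ∧ ‖u‖ = 1 ∧ sSup ((fun d => ⟪u, d⟫ / ‖d‖) '' D) = cmRel L D}

theorem Submodule.exists_finite_subset_le_span_of_fg {R M : Type*} [Semiring R] [AddCommMonoid M]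
    [Module R M] {K : Submodule R M} (hK : K.FG) {s : Set M} (hKs : K ≤ span R s) :
    ∃ t ⊆ s, t.Finite ∧ K ≤ span R t := by
  obtain ⟨T, rfl⟩ := hK
  choose! f hfs hf using fun x (hx : x ∈ T) => mem_span_finite_of_mem_span (hKs (subset_span hx))
  refine ⟨⋃ x ∈ T, f x, Set.iUnion₂_subset hfs,
    T.finite_toSet.biUnion fun x _ => (f x).finite_toSet, span_le.2 fun x hx => ?_⟩
  exact span_mono (Set.subset_biUnion_of_mem (u := fun x => (f x : Set M)) hx) (hf x hx)

namespace PointedCone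

section OrderedSemiring

variable {R E : Type*} [Semiring R] [PartialOrder R] [IsOrderedRing R] [AddCommMonoid E]
  [Module R E]

theorem exists_finite_subset_hull_eq_of_fg {K : PointedCone R E} (hK : K.FG) {s : Set E}
    (hs : hull R s = K) : ∃ t ⊆ s, t.Finite ∧ hull R t = K := by
  obtain ⟨t, hts, ht, hKt⟩ := Submodule.exists_finite_subset_le_span_of_fg hK hs.ge
  exact ⟨t, hts, ht, le_antisymm (hs ▸ Submodule.span_mono hts) hKt⟩

end OrderedSemiring

section OrderedRing

variable {R E : Type*} [Ring R] [LinearOrder R] [IsOrderedRing R] [AddCommGroup E] [Module R E]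

theorem hull_union_neg (s : Set E) : hull R (s ∪ -s) = Submodule.span R s := by
  refine le_antisymm ?_ ?_
  · calc hull R (s ∪ -s) ≤ Submodule.span R (s ∪ -s) := hull_le_span R _
      _ = Submodule.span R s := by rw [Submodule.span_union, Submodule.span_neg, sup_idem]
  · refine gc_ofSubmodule_lineal.le_iff_le.2 (Submodule.span_le.2 fun x hx => ?_)
    exact ⟨subset_hull (Or.inl hx), subset_hull (Or.inr (by simpa using hx))⟩

theorem fg_ofSubmodule {S : Submodule R E} (hS : S.FG) : (S : PointedCone R E).FG := by
  obtain ⟨T, hT, rfl⟩ := Submodule.fg_def.1 hS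
  exact Submodule.fg_def.2 ⟨T ∪ -T, hT.union hT.neg, hull_union_neg T⟩

end OrderedRing

end PointedCone

theorem pspan_eq_hull {E : Type*} [AddCommGroup E] [Module ℝ E] (D : Set E) :
    pspan D = PointedCone.hull ℝ D := by
  ext x
  simp only [pspan, SetLike.mem_coe, Submodule.mem_span_set']
  constructor
  · rintro ⟨k, d, c, hd, hc, rfl⟩
    exact ⟨k, fun i => ⟨c i, hc i⟩, fun i => ⟨d i, hd i⟩, rfl⟩
  · rintro ⟨k, c, d, rfl⟩
    exact ⟨k, fun i => d i, fun i => c i, fun i => (d i).2, fun i => (c i).2, rfl⟩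

theorem stmt1_general {n : ℕ} (D : Set (EuclideanSpace ℝ (Fin n)))
    (L : Submodule ℝ (EuclideanSpace ℝ (Fin n)))
    (h : pspan D = (L : Set (EuclideanSpace ℝ (Fin n)))) :
    ∃ C : Set (EuclideanSpace ℝ (Fin n)), C ⊆ D ∧ C.Finite ∧
      pspan C = (L : Set (EuclideanSpace ℝ (Fin n))) := by
  have hD : PointedCone.hull ℝ D = L := SetLike.coe_injective ((pspan_eq_hull D).symm.trans h)
  obtain ⟨C, hCD, hC, hCL⟩ := PointedCone.exists_finite_subset_hull_eq_of_fg
    (PointedCone.fg_ofSubmodule (IsNoetherian.noetherian L)) hD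
  exact ⟨C, hCD, hC, (pspan_eq_hull C).trans (congrArg SetLike.coe hCL)⟩

theorem stmt1 {n : ℕ} (D : Set (EuclideanSpace ℝ (Fin n))) (hne : D.Nonempty)
    (h0 : (0 : EuclideanSpace ℝ (Fin n)) ∉ D)
    (L : Submodule ℝ (EuclideanSpace ℝ (Fin n)))
    (h : pspan D = (L : Set (EuclideanSpace ℝ (Fin n)))) :
    ∃ C : Set (EuclideanSpace ℝ (Fin n)), C ⊆ D ∧ C.Finite ∧
      pspan C = (L : Set (EuclideanSpace ℝ (Fin n))) :=
  stmt1_general D L h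
end
end

section
/- Let D = {d₁, …, d_s} ⊆ ℝⁿ be a finite set of s ≥ 2 nonzero vectors. Then the following are equivalent: (a) pspan(D) = span(D); (b) there exist real numbers α₁, …, α_s with αᵢ > 0 for all i and ∑ᵢ αᵢ dᵢ = 0; (c) there exist real numbers β₁, …, β_s with βᵢ ≥ 1 for all i and ∑ᵢ βᵢ dᵢ = 0; (d) there exist real numbers γ₁, …, γ_s with γᵢ ≥ 0 for all i and ∑ᵢ γᵢ dᵢ = −∑ᵢ dᵢ. -/
open scoped RealInnerProductSpace

noncomputable section

section PositiveSpan

variable {E : Type*} [AddCommGroup E] [Module ℝ E]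

theorem pspan_subset_span (D : Set E) : pspan D ⊆ Submodule.span ℝ D := by
  rintro _ ⟨k, e, c, he, -, rfl⟩
  exact Submodule.sum_mem _ fun i _ =>
    Submodule.smul_mem _ _ (Submodule.subset_span (he i))

variable {ι : Type*} [Fintype ι] (d : ι → E)

theorem mem_pspan_range_iff (x : E) :
    x ∈ pspan (Set.range d) ↔ ∃ c : ι → ℝ, (∀ i, 0 ≤ c i) ∧ x = ∑ i, c i • d i := by
  classical
  constructor
  · rintro ⟨k, e, c, he, hc, rfl⟩
    choose f hf using he
    refine ⟨fun i => ∑ j with f j = i, c j, fun i => Finset.sum_nonneg fun j _ => hc j, ?_⟩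
    rw [← Finset.sum_fiberwise Finset.univ f (fun j => c j • e j)]
    refine Finset.sum_congr rfl fun i _ => ?_
    rw [Finset.sum_smul]
    refine Finset.sum_congr rfl fun j hj => ?_
    rw [← hf j, (Finset.mem_filter.mp hj).2]
  · rintro ⟨c, hc, rfl⟩
    let e := Fintype.equivFin ι
    refine ⟨Fintype.card ι, d ∘ e.symm, c ∘ e.symm, fun _ => ⟨_, rfl⟩, fun _ => hc _, ?_⟩
    exact (e.symm.sum_comp fun i => c i • d i).symm

/-- A strictly positive relation among the `d i` lets one shift any coefficients of a
linear combination until they are all nonnegative. -/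
theorem span_subset_pspan_range {α : ι → ℝ} (hα : ∀ i, 0 < α i)
    (hd : ∑ i, α i • d i = 0) :
    (Submodule.span ℝ (Set.range d) : Set E) ⊆ pspan (Set.range d) := by
  intro x hx
  obtain ⟨c, rfl⟩ := (Submodule.mem_span_range_iff_exists_fun ℝ).mp hx
  set t : ℝ := ∑ j, |c j| / α j
  have hc : ∀ i, |c i| ≤ t * α i := fun i =>
    calc |c i| = |c i| / α i * α i := (div_mul_cancel₀ _ (hα i).ne').symm
      _ ≤ t * α i := by
        gcongr
        · exact (hα i).le
        · exact Finset.single_le_sum (f := fun j => |c j| / α j)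
            (fun j _ => div_nonneg (abs_nonneg _) (hα j).le) (Finset.mem_univ i)
  refine (mem_pspan_range_iff d _).mpr
    ⟨fun i => c i + t * α i, fun i => by linarith [hc i, neg_abs_le (c i)], ?_⟩
  simp only [add_smul, mul_smul, Finset.sum_add_distrib, ← Finset.smul_sum, hd, smul_zero,
    add_zero]

theorem pspan_range_eq_span_tfae :
    List.TFAE
      [pspan (Set.range d) = (Submodule.span ℝ (Set.range d) : Set E),
        ∃ α : ι → ℝ, (∀ i, 0 < α i) ∧ ∑ i, α i • d i = 0,
        ∃ β : ι → ℝ, (∀ i, 1 ≤ β i) ∧ ∑ i, β i • d i = 0,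
        ∃ γ : ι → ℝ, (∀ i, 0 ≤ γ i) ∧ ∑ i, γ i • d i = -∑ i, d i] := by
  tfae_have 1 → 4 := fun h => by
    have hmem : -∑ i, d i ∈ (Submodule.span ℝ (Set.range d) : Set E) :=
      Submodule.neg_mem _ (Submodule.sum_mem _ fun i _ => Submodule.subset_span ⟨i, rfl⟩)
    obtain ⟨γ, hγ, hsum⟩ := (mem_pspan_range_iff d _).mp (h ▸ hmem)
    exact ⟨γ, hγ, hsum.symm⟩
  tfae_have 4 → 3 := fun ⟨γ, hγ, hsum⟩ => by
    refine ⟨fun i => γ i + 1, fun i => by linarith [hγ i], ?_⟩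
    simp only [add_smul, one_smul, Finset.sum_add_distrib, hsum, neg_add_cancel]
  tfae_have 3 → 2 := fun ⟨β, hβ, hsum⟩ => ⟨β, fun i => one_pos.trans_le (hβ i), hsum⟩
  tfae_have 2 → 1 := fun ⟨α, hα, hsum⟩ =>
    (pspan_subset_span _).antisymm (span_subset_pspan_range d hα hsum)
  tfae_finish

end PositiveSpan

theorem stmt4_general {n s : ℕ} (d : Fin s → EuclideanSpace ℝ (Fin n)) :
    ((pspan (Set.range d) =
        (Submodule.span ℝ (Set.range d) : Set (EuclideanSpace ℝ (Fin n)))) ↔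
      (∃ α : Fin s → ℝ, (∀ i, 0 < α i) ∧ ∑ i, α i • d i = 0)) ∧
    ((pspan (Set.range d) =
        (Submodule.span ℝ (Set.range d) : Set (EuclideanSpace ℝ (Fin n)))) ↔
      (∃ β : Fin s → ℝ, (∀ i, 1 ≤ β i) ∧ ∑ i, β i • d i = 0)) ∧
    ((pspan (Set.range d) =
        (Submodule.span ℝ (Set.range d) : Set (EuclideanSpace ℝ (Fin n)))) ↔
      (∃ γ : Fin s → ℝ, (∀ i, 0 ≤ γ i) ∧ ∑ i, γ i • d i = -∑ i, d i)) :=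
  have h := pspan_range_eq_span_tfae d
  ⟨h.out 0 1, h.out 0 2, h.out 0 3⟩

theorem stmt4 {n s : ℕ} (hs : 2 ≤ s) (d : Fin s → EuclideanSpace ℝ (Fin n))
    (hinj : Function.Injective d) (h0 : ∀ i, d i ≠ 0) :
    ((pspan (Set.range d) =
        (Submodule.span ℝ (Set.range d) : Set (EuclideanSpace ℝ (Fin n)))) ↔
      (∃ α : Fin s → ℝ, (∀ i, 0 < α i) ∧ ∑ i, α i • d i = 0)) ∧
    ((pspan (Set.range d) =
        (Submodule.span ℝ (Set.range d) : Set (EuclideanSpace ℝ (Fin n)))) ↔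
      (∃ β : Fin s → ℝ, (∀ i, 1 ≤ β i) ∧ ∑ i, β i • d i = 0)) ∧
    ((pspan (Set.range d) =
        (Submodule.span ℝ (Set.range d) : Set (EuclideanSpace ℝ (Fin n)))) ↔
      (∃ γ : Fin s → ℝ, (∀ i, 0 ≤ γ i) ∧ ∑ i, γ i • d i = -∑ i, d i)) :=
  stmt4_general d
end
end

section
/- Let D ⊆ ℝⁿ be a nonempty (possibly infinite) set of nonzero vectors contained in a linear subspace L ⊆ ℝⁿ. If pspan(D) ≠ L, then there exists a nonzero vector h ∈ L such that ⟨h, d⟩ ≤ 0 for every d ∈ D (i.e., all vectors of D lie in a closed half-space of L). -/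
open scoped RealInnerProductSpace

noncomputable section

theorem PointedCone.hull_image {E F : Type*} [AddCommGroup E] [Module ℝ E] [AddCommGroup F]
    [Module ℝ F] (f : E →ₗ[ℝ] F) (s : Set E) :
    hull ℝ (f '' s) = (hull ℝ s).map f :=
  Submodule.span_image (f : E →ₗ[{c : ℝ // 0 ≤ c}] F)

theorem Convex.eq_univ_of_dense {V : Type*} [NormedAddCommGroup V] [NormedSpace ℝ V]
    [FiniteDimensional ℝ V] {s : Set V} (hs : Convex ℝ s) (hd : Dense s) : s = Set.univ := by
  have hspan : affineSpan ℝ s = ⊤ := by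
    rw [← AffineSubspace.coe_eq_univ_iff, ← Set.univ_subset_iff, ← hd.closure_eq]
    exact closure_minimal (subset_affineSpan ℝ s) (affineSpan ℝ s).closed_of_finiteDimensional
  have hint : interior s = Set.univ := by
    rw [← hs.interior_closure_eq_interior_of_nonempty_interior
      (hs.interior_nonempty_iff_affineSpan_eq_top.2 hspan), hd.closure_eq, interior_univ]
  exact Set.eq_univ_of_univ_subset (hint ▸ interior_subset)

theorem PointedCone.exists_ne_zero_forall_inner_nonpos {V : Type*} [NormedAddCommGroup V]
    [InnerProductSpace ℝ V] [FiniteDimensional ℝ V] {K : PointedCone ℝ V} (hK : K ≠ ⊤) :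
    ∃ h ≠ 0, ∀ x ∈ K, ⟪h, x⟫ ≤ 0 := by
  obtain ⟨b, hb⟩ : ∃ b, b ∉ closure (K : Set V) := by
    by_contra! hdense
    exact hK (SetLike.coe_injective (K.convex.eq_univ_of_dense hdense))
  obtain ⟨y, hyK, hyb⟩ := ProperCone.hyperplane_separation' (Submodule.closure K) (x₀ := b) hb
  refine ⟨-y, ?_, fun x hx => ?_⟩
  · intro hy
    rw [neg_eq_zero.1 hy, inner_zero_right] at hyb
    exact hyb.false
  · rw [inner_neg_left, real_inner_comm, neg_nonpos]
    exact hyK x (subset_closure hx)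

theorem stmt6_general {n : ℕ} (D : Set (EuclideanSpace ℝ (Fin n)))
    (L : Submodule ℝ (EuclideanSpace ℝ (Fin n)))
    (hDL : D ⊆ (L : Set (EuclideanSpace ℝ (Fin n))))
    (h : pspan D ≠ (L : Set (EuclideanSpace ℝ (Fin n)))) :
    ∃ h' ∈ L, h' ≠ 0 ∧ ∀ d ∈ D, ⟪h', d⟫ ≤ 0 := by
  let D' : Set L := (↑) ⁻¹' D
  have hD' : PointedCone.hull ℝ D' ≠ ⊤ := by
    intro htop
    apply h
    have hD : L.subtype '' D' = D :=
      (Subtype.image_preimage_coe _ D).trans (Set.inter_eq_right.2 hDL)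
    rw [pspan_eq_hull, ← hD, PointedCone.hull_image, htop, PointedCone.coe_map]
    simp
  obtain ⟨h', hne, hle⟩ := PointedCone.exists_ne_zero_forall_inner_nonpos hD'
  exact ⟨h', h'.2, by simpa using hne, fun d hd => hle ⟨d, hDL hd⟩ (PointedCone.subset_hull hd)⟩

theorem stmt6 {n : ℕ} (D : Set (EuclideanSpace ℝ (Fin n))) (hne : D.Nonempty)
    (h0 : (0 : EuclideanSpace ℝ (Fin n)) ∉ D)
    (L : Submodule ℝ (EuclideanSpace ℝ (Fin n)))
    (hDL : D ⊆ (L : Set (EuclideanSpace ℝ (Fin n))))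
    (h : pspan D ≠ (L : Set (EuclideanSpace ℝ (Fin n)))) :
    ∃ h' ∈ L, h' ≠ 0 ∧ ∀ d ∈ D, ⟪h', d⟫ ≤ 0 :=
  stmt6_general D L hDL h
end
end

section
/- Let D ⊆ ℝⁿ be a nonempty finite set of nonzero vectors and let L ⊆ ℝⁿ be a nontrivial linear subspace. Then CM(D) ≤ CM_L(D), with equality if and only if cV(D) ∩ L ≠ ∅. -/
/-!
Minimising the continuous function `u ↦ max_{d ∈ D} ⟪u, d⟫ / ‖d‖` over the unit sphere of `L`
instead of the whole unit sphere minimises over a smaller set, so the minimum can only grow.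
Both spheres are compact, so both minima are attained; hence the two agree exactly when a
minimiser of the larger problem already lies in `L`.
-/

open scoped RealInnerProductSpace

noncomputable section

theorem Set.Finite.continuous_sSup_image {X ι α : Type*} [TopologicalSpace X]
    [ConditionallyCompleteLinearOrder α] [TopologicalSpace α] [OrderTopology α]
    {D : Set ι} (hD : D.Finite) {g : X → ι → α} (hg : ∀ d ∈ D, Continuous fun x ↦ g x d) :
    Continuous fun x ↦ sSup (g x '' D) := by
  rcases D.eq_empty_or_nonempty with rfl | hne
  · simpa only [Set.image_empty] using continuous_const
  · convert Continuous.finset_sup'_apply (hD.toFinset_nonempty.2 hne) (f := fun d x ↦ g x d)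
      (fun d hd ↦ hg d (hD.mem_toFinset.1 hd)) using 2 with x
    rw [Finset.sup'_eq_csSup_image, hD.coe_toFinset]

section CompactMinimum

variable {X : Type*} [TopologicalSpace X] {f : X → ℝ} {s t : Set X}

theorem IsCompact.sInf_image_le_sInf_image_of_subset (ht : IsCompact t) (hf : ContinuousOn f t)
    (hst : s ⊆ t) (hs : s.Nonempty) : sInf (f '' t) ≤ sInf (f '' s) :=
  csInf_le_csInf (ht.image_of_continuousOn hf).bddBelow (hs.image f) (Set.image_mono hst)

theorem IsCompact.sInf_image_eq_sInf_image_iff_of_subset (hs : IsCompact s) (ht : IsCompact t)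
    (hf : ContinuousOn f t) (hst : s ⊆ t) (hsne : s.Nonempty) :
    sInf (f '' t) = sInf (f '' s) ↔ ∃ x ∈ s, f x = sInf (f '' t) := by
  constructor
  · intro h
    obtain ⟨x, hx, hfx⟩ := (hs.image_of_continuousOn (hf.mono hst)).sInf_mem (hsne.image f)
    exact ⟨x, hx, hfx.trans h.symm⟩
  · rintro ⟨x, hx, hfx⟩
    refine le_antisymm (ht.sInf_image_le_sInf_image_of_subset hf hst hsne) ?_
    exact (csInf_le (hs.image_of_continuousOn (hf.mono hst)).bddBelow ⟨x, hx, rfl⟩).trans_eq hfx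

end CompactMinimum

section CosineMeasure

variable {E : Type*} [NormedAddCommGroup E] [InnerProductSpace ℝ E]

namespace Submodule

theorem isCompact_setOf_mem_norm_eq_one [FiniteDimensional ℝ E] (L : Submodule ℝ E) :
    IsCompact {u : E | u ∈ L ∧ ‖u‖ = 1} := by
  have hsphere : {u : E | u ∈ L ∧ ‖u‖ = 1} = (L : Set E) ∩ Metric.sphere 0 1 := by
    ext u
    simp
  rw [hsphere]
  exact (isCompact_sphere 0 1).inter_left L.closed_of_finiteDimensional

theorem exists_mem_norm_eq_one {L : Submodule ℝ E} (hL : L ≠ ⊥) : ∃ u ∈ L, ‖u‖ = 1 := by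
  obtain ⟨x, hxL, hx0⟩ := L.exists_mem_ne_zero_of_ne_bot hL
  exact ⟨(‖x‖⁻¹ : ℝ) • x, L.smul_mem _ hxL, norm_smul_inv_norm hx0⟩

end Submodule

theorem continuous_sSup_inner_div_norm_image {D : Set E} (hD : D.Finite) :
    Continuous fun u : E ↦ sSup ((fun d ↦ ⟪u, d⟫ / ‖d‖) '' D) :=
  hD.continuous_sSup_image fun _ _ ↦ (continuous_id.inner continuous_const).div_const _

variable [FiniteDimensional ℝ E] {D : Set E} {L L' : Submodule ℝ E}

theorem cmRel_le_cmRel_of_le (hD : D.Finite) (hLL' : L ≤ L') (hL : L ≠ ⊥) :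
    cmRel L' D ≤ cmRel L D :=
  L'.isCompact_setOf_mem_norm_eq_one.sInf_image_le_sInf_image_of_subset
    (continuous_sSup_inner_div_norm_image hD).continuousOn (fun _ hu ↦ ⟨hLL' hu.1, hu.2⟩)
    (Submodule.exists_mem_norm_eq_one hL)

theorem cmRel_eq_cmRel_iff_of_le (hD : D.Finite) (hLL' : L ≤ L') (hL : L ≠ ⊥) :
    cmRel L' D = cmRel L D ↔ (cVRel L' D ∩ L).Nonempty := by
  rw [cmRel, cmRel, IsCompact.sInf_image_eq_sInf_image_iff_of_subset
    L.isCompact_setOf_mem_norm_eq_one L'.isCompact_setOf_mem_norm_eq_one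
    (continuous_sSup_inner_div_norm_image hD).continuousOn (fun _ hu ↦ ⟨hLL' hu.1, hu.2⟩)
    (Submodule.exists_mem_norm_eq_one hL)]
  constructor
  · rintro ⟨u, ⟨huL, hu1⟩, hu⟩
    exact ⟨u, ⟨hLL' huL, hu1, hu⟩, huL⟩
  · rintro ⟨u, ⟨-, hu1, hu⟩, huL⟩
    exact ⟨u, ⟨huL, hu1⟩, hu⟩

end CosineMeasure

theorem stmt9_general {n : ℕ} (D : Set (EuclideanSpace ℝ (Fin n))) (hfin : D.Finite)
    (L : Submodule ℝ (EuclideanSpace ℝ (Fin n))) (hL : L ≠ ⊥) :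
    cmRel (⊤ : Submodule ℝ (EuclideanSpace ℝ (Fin n))) D ≤ cmRel L D ∧
    (cmRel (⊤ : Submodule ℝ (EuclideanSpace ℝ (Fin n))) D = cmRel L D ↔
      (cVRel (⊤ : Submodule ℝ (EuclideanSpace ℝ (Fin n))) D ∩
        (L : Set (EuclideanSpace ℝ (Fin n)))).Nonempty) :=
  ⟨cmRel_le_cmRel_of_le hfin le_top hL, cmRel_eq_cmRel_iff_of_le hfin le_top hL⟩

theorem stmt9 {n : ℕ} (D : Set (EuclideanSpace ℝ (Fin n))) (hne : D.Nonempty)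
    (hfin : D.Finite) (h0 : (0 : EuclideanSpace ℝ (Fin n)) ∉ D)
    (L : Submodule ℝ (EuclideanSpace ℝ (Fin n))) (hL : L ≠ ⊥) :
    cmRel (⊤ : Submodule ℝ (EuclideanSpace ℝ (Fin n))) D ≤ cmRel L D ∧
    (cmRel (⊤ : Submodule ℝ (EuclideanSpace ℝ (Fin n))) D = cmRel L D ↔
      (cVRel (⊤ : Submodule ℝ (EuclideanSpace ℝ (Fin n))) D ∩
        (L : Set (EuclideanSpace ℝ (Fin n)))).Nonempty) :=
  stmt9_general D hfin L hL
end
end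

section
/- Let D ⊆ ℝⁿ be a nonempty finite set of nonzero vectors with span(D) ≠ ℝⁿ. If pspan(D) = span(D), then CM(D) = 0. -/
open scoped RealInnerProductSpace

noncomputable section

/-!
A unit vector orthogonal to `span D` sees every element of `D` at angle `π/2`, so `CM(D) ≤ 0`.
Conversely, if `pspan D` is a subspace it contains `-d₀`, so no `u` can have negative inner
product with all of `D`, and every value in the minimum is `≥ 0`.
-/

section CosineMeasure

variable {E : Type*} [NormedAddCommGroup E] [InnerProductSpace ℝ E]

theorem exists_inner_nonneg_of_pspan_eq_span {D : Set E}
    (hps : pspan D = (Submodule.span ℝ D : Set E)) {d₀ : E} (hd₀ : d₀ ∈ D) (u : E) :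
    ∃ d ∈ D, 0 ≤ ⟪u, d⟫ := by
  by_contra! hneg
  have hmem : -d₀ ∈ pspan D := hps ▸ neg_mem (Submodule.subset_span hd₀)
  obtain ⟨k, d, c, hdD, hc, hsum⟩ := hmem
  have hpos : 0 < ⟪u, -d₀⟫ := by
    rw [inner_neg_right]
    linarith [hneg d₀ hd₀]
  have hnonpos : ⟪u, -d₀⟫ ≤ 0 := by
    rw [hsum, inner_sum]
    refine Finset.sum_nonpos fun i _ => ?_
    rw [real_inner_smul_right]
    exact mul_nonpos_of_nonneg_of_nonpos (hc i) (hneg (d i) (hdD i)).le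
  linarith

theorem Submodule.exists_norm_eq_one_mem_orthogonal {K : Submodule ℝ E}
    [K.HasOrthogonalProjection] (hK : K ≠ ⊤) : ∃ u ∈ Kᗮ, ‖u‖ = 1 := by
  obtain ⟨w, hwK, hw⟩ := (Submodule.ne_bot_iff _).mp (mt Submodule.orthogonal_eq_bot_iff.mp hK)
  exact ⟨‖w‖⁻¹ • w, Kᗮ.smul_mem _ hwK, norm_smul_inv_norm hw⟩

theorem cmRel_nonneg {L : Submodule ℝ E} {D : Set E} (h : ∀ u ∈ L, ∃ d ∈ D, 0 ≤ ⟪u, d⟫) :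
    0 ≤ cmRel L D := by
  refine Real.sInf_nonneg ?_
  rintro _ ⟨u, ⟨huL, -⟩, rfl⟩
  obtain ⟨d, hdD, hd⟩ := h u huL
  exact Real.sSup_nonneg' ⟨_, ⟨d, hdD, rfl⟩, div_nonneg hd (norm_nonneg d)⟩

theorem cmRel_nonpos {L : Submodule ℝ E} {D : Set E} {u : E} (huL : u ∈ L) (hu : ‖u‖ = 1)
    (hD : u ∈ (Submodule.span ℝ D)ᗮ) : cmRel L D ≤ 0 := by
  refine Real.sInf_nonpos' ⟨_, ⟨u, ⟨huL, hu⟩, rfl⟩, Real.sSup_nonpos ?_⟩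
  rintro _ ⟨d, hdD, rfl⟩
  simp only [Submodule.inner_left_of_mem_orthogonal (Submodule.subset_span hdD) hD, zero_div,
    le_refl]

end CosineMeasure

theorem stmt11_general {n : ℕ} (D : Set (EuclideanSpace ℝ (Fin n))) (hne : D.Nonempty)
    (hproper : Submodule.span ℝ D ≠ (⊤ : Submodule ℝ (EuclideanSpace ℝ (Fin n))))
    (hps : pspan D = (Submodule.span ℝ D : Set (EuclideanSpace ℝ (Fin n)))) :
    cmRel (⊤ : Submodule ℝ (EuclideanSpace ℝ (Fin n))) D = 0 := by
  obtain ⟨d₀, hd₀⟩ := hne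
  obtain ⟨u, horth, hu⟩ := Submodule.exists_norm_eq_one_mem_orthogonal hproper
  exact le_antisymm (cmRel_nonpos Submodule.mem_top hu horth)
    (cmRel_nonneg fun v _ => exists_inner_nonneg_of_pspan_eq_span hps hd₀ v)

theorem stmt11 {n : ℕ} (D : Set (EuclideanSpace ℝ (Fin n))) (hne : D.Nonempty)
    (hfin : D.Finite) (h0 : (0 : EuclideanSpace ℝ (Fin n)) ∉ D)
    (hproper : Submodule.span ℝ D ≠ (⊤ : Submodule ℝ (EuclideanSpace ℝ (Fin n))))
    (hps : pspan D = (Submodule.span ℝ D : Set (EuclideanSpace ℝ (Fin n)))) :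
    cmRel (⊤ : Submodule ℝ (EuclideanSpace ℝ (Fin n))) D = 0 :=
  stmt11_general D hne hproper hps
end
end

section
/- Let D ⊆ ℝⁿ be a set consisting of exactly 2 nonzero vectors. Then either CM_D(D) = 1 or CM_D(D) < 0. -/
open scoped RealInnerProductSpace

noncomputable section

/-!
Normalize the two vectors to unit vectors `e₁`, `e₂`. If `e₁ + e₂ = 0`, the span is the line
through `e₁`, and for its unit vectors `u = ±e₁` the two cosines are `1` and `-1`.
Otherwise `u = -(e₁ + e₂)/‖e₁ + e₂‖` lies in the span and makes an obtuse angle with both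
vectors, because `⟪e₁ + e₂, e₁⟫ = 1 + ⟪e₁, e₂⟫ = ⟪e₁ + e₂, e₂⟫` are halves of `‖e₁ + e₂‖² > 0`.
-/

open NormedSpace (normalize norm_normalize norm_smul_normalize)

section

variable {E : Type*} [NormedAddCommGroup E] [InnerProductSpace ℝ E]

lemma inner_div_norm_eq_inner_normalize (u d : E) : ⟪u, d⟫ / ‖d‖ = ⟪u, normalize d⟫ := by
  rw [NormedSpace.normalize, real_inner_smul_right, div_eq_inv_mul]

lemma abs_inner_div_norm_le_one {u : E} (hu : ‖u‖ = 1) (d : E) : |⟪u, d⟫ / ‖d‖| ≤ 1 := by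
  rw [abs_div, abs_norm]
  exact div_le_one_of_le₀ (by simpa [hu] using abs_real_inner_le_norm u d) (norm_nonneg d)

lemma neg_one_le_sSup_inner_div_norm {u : E} (hu : ‖u‖ = 1) (D : Set E) :
    -1 ≤ sSup ((fun d => ⟪u, d⟫ / ‖d‖) '' D) := by
  rcases D.eq_empty_or_nonempty with rfl | ⟨d, hd⟩
  · simp
  · have hbdd : BddAbove ((fun d => ⟪u, d⟫ / ‖d‖) '' D) := by
      refine ⟨1, ?_⟩
      rintro _ ⟨x, -, rfl⟩
      exact (abs_le.1 (abs_inner_div_norm_le_one hu x)).2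
    exact le_csSup_of_le hbdd (Set.mem_image_of_mem _ hd)
      (abs_le.1 (abs_inner_div_norm_le_one hu d)).1

lemma cmRel_le {L : Submodule ℝ E} (D : Set E) {u : E} (huL : u ∈ L) (hu : ‖u‖ = 1) :
    cmRel L D ≤ sSup ((fun d => ⟪u, d⟫ / ‖d‖) '' D) := by
  refine csInf_le ⟨-1, ?_⟩ ⟨u, ⟨huL, hu⟩, rfl⟩
  rintro _ ⟨v, ⟨-, hv⟩, rfl⟩
  exact neg_one_le_sSup_inner_div_norm hv D

lemma le_cmRel {L : Submodule ℝ E} {D : Set E} {c : ℝ} (hne : ∃ u ∈ L, ‖u‖ = 1)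
    (h : ∀ u ∈ L, ‖u‖ = 1 → c ≤ sSup ((fun d => ⟪u, d⟫ / ‖d‖) '' D)) : c ≤ cmRel L D := by
  obtain ⟨u, huL, hu⟩ := hne
  refine le_csInf ⟨_, u, ⟨huL, hu⟩, rfl⟩ ?_
  rintro _ ⟨v, ⟨hvL, hv⟩, rfl⟩
  exact h v hvL hv

lemma sSup_inner_div_norm_pair (u a b : E) :
    sSup ((fun d => ⟪u, d⟫ / ‖d‖) '' {a, b}) = max ⟪u, normalize a⟫ ⟪u, normalize b⟫ := by
  rw [Set.image_pair, csSup_pair, inner_div_norm_eq_inner_normalize,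
    inner_div_norm_eq_inner_normalize]

lemma normalize_mem_span_pair_left (a b : E) : normalize a ∈ Submodule.span ℝ {a, b} :=
  Submodule.smul_mem _ _ (Submodule.subset_span (Set.mem_insert a {b}))

lemma normalize_mem_span_pair_right (a b : E) : normalize b ∈ Submodule.span ℝ {a, b} :=
  Submodule.smul_mem _ _ (Submodule.subset_span (Set.mem_insert_of_mem a rfl))

lemma abs_inner_eq_one_of_mem_span_singleton {e u : E} (he : ‖e‖ = 1) (hu : u ∈ ℝ ∙ e)
    (hu₁ : ‖u‖ = 1) : |⟪u, e⟫| = 1 := by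
  obtain ⟨c, rfl⟩ := Submodule.mem_span_singleton.1 hu
  rw [norm_smul, he, mul_one, Real.norm_eq_abs] at hu₁
  rwa [real_inner_smul_left, real_inner_self_eq_norm_sq, he, one_pow, mul_one]

lemma cmRel_pair_eq_one_of_normalize_add_eq_zero {a b : E} (ha : a ≠ 0)
    (hab : normalize a + normalize b = 0) : cmRel (Submodule.span ℝ {a, b}) {a, b} = 1 := by
  set e := normalize a
  have he : ‖e‖ = 1 := norm_normalize ha
  have hb : normalize b = -e := eq_neg_of_add_eq_zero_right hab
  have hspan : Submodule.span ℝ {a, b} ≤ ℝ ∙ e := by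
    rw [Submodule.span_le, Set.insert_subset_iff, Set.singleton_subset_iff]
    constructor
    · rw [← norm_smul_normalize a]
      exact Submodule.smul_mem _ _ (Submodule.mem_span_singleton_self e)
    · rw [← norm_smul_normalize b, hb]
      exact Submodule.smul_mem _ _ (Submodule.neg_mem _ (Submodule.mem_span_singleton_self e))
  have hvalue : ∀ u ∈ Submodule.span ℝ {a, b}, ‖u‖ = 1 →
      sSup ((fun d => ⟪u, d⟫ / ‖d‖) '' {a, b}) = 1 := by
    intro u hu hu₁
    rw [sSup_inner_div_norm_pair, hb, inner_neg_right, ← abs_eq_max_neg]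
    exact abs_inner_eq_one_of_mem_span_singleton he (hspan hu) hu₁
  have heL := normalize_mem_span_pair_left a b
  refine le_antisymm ?_ (le_cmRel ⟨e, heL, he⟩ fun u hu hu₁ => (hvalue u hu hu₁).ge)
  exact (cmRel_le _ heL he).trans (hvalue e heL he).le

lemma inner_add_left_self_pos {e₁ e₂ : E} (h₁ : ‖e₁‖ = 1) (h₂ : ‖e₂‖ = 1) (h : e₁ + e₂ ≠ 0) :
    0 < ⟪e₁ + e₂, e₁⟫ := by
  have hsq : 2 * ⟪e₁ + e₂, e₁⟫ = ‖e₁ + e₂‖ ^ 2 := by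
    rw [inner_add_left, real_inner_self_eq_norm_sq, norm_add_sq_real, h₁, h₂, real_inner_comm]
    ring
  have : 0 < ‖e₁ + e₂‖ := norm_pos_iff.2 h
  nlinarith

lemma cmRel_pair_neg_of_normalize_add_ne_zero {a b : E} (ha : a ≠ 0) (hb : b ≠ 0)
    (hab : normalize a + normalize b ≠ 0) : cmRel (Submodule.span ℝ {a, b}) {a, b} < 0 := by
  set s := normalize a + normalize b with hs
  have hu : ‖-normalize s‖ = 1 := by rw [norm_neg]; exact norm_normalize hab
  have huL : -normalize s ∈ Submodule.span ℝ {a, b} :=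
    Submodule.neg_mem _ (Submodule.smul_mem _ _
      (Submodule.add_mem _ (normalize_mem_span_pair_left a b) (normalize_mem_span_pair_right a b)))
  have hobtuse : ∀ e : E, 0 < ⟪s, e⟫ → ⟪-normalize s, e⟫ < 0 := fun e he => by
    rw [inner_neg_left, NormedSpace.normalize, real_inner_smul_left, neg_neg_iff_pos]
    exact mul_pos (inv_pos.2 (norm_pos_iff.2 hab)) he
  have hna := norm_normalize ha
  have hnb := norm_normalize hb
  have hsb : 0 < ⟪s, normalize b⟫ := by
    rw [hs, add_comm]
    exact inner_add_left_self_pos hnb hna (by rwa [add_comm])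
  calc cmRel (Submodule.span ℝ {a, b}) {a, b}
      ≤ sSup ((fun d => ⟪-normalize s, d⟫ / ‖d‖) '' {a, b}) := cmRel_le _ huL hu
    _ < 0 := by
      rw [sSup_inner_div_norm_pair]
      exact max_lt (hobtuse _ (inner_add_left_self_pos hna hnb hab)) (hobtuse _ hsb)

end

theorem stmt14 {n : ℕ} (D : Set (EuclideanSpace ℝ (Fin n)))
    (h0 : (0 : EuclideanSpace ℝ (Fin n)) ∉ D) (hcard : D.ncard = 2) :
    cmRel (Submodule.span ℝ D) D = 1 ∨ cmRel (Submodule.span ℝ D) D < 0 := by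
  obtain ⟨a, b, -, rfl⟩ := Set.ncard_eq_two.mp hcard
  have ha : a ≠ 0 := fun h => h0 (h ▸ Set.mem_insert a {b})
  have hb : b ≠ 0 := fun h => h0 (h ▸ Set.mem_insert_of_mem a rfl)
  by_cases hab : normalize a + normalize b = 0
  · exact Or.inl (cmRel_pair_eq_one_of_normalize_add_eq_zero ha hab)
  · exact Or.inr (cmRel_pair_neg_of_normalize_add_ne_zero ha hb hab)
end
end

section
/- Let D ⊆ ℝⁿ be a nonempty (possibly infinite) set of nonzero vectors whose radius Δ_D = sup_{d ∈ D} ‖d‖ satisfies 0 < Δ_D < ∞, and suppose pspan(D) = span(D). Let f : ℝⁿ → ℝ and x⁰ ∈ ℝⁿ, and suppose f(x⁰) ≤ f(x⁰ + d) for all d ∈ D. If f is differentiable with gradient ∇f Lipschitz continuous with constant L_∇f ≥ 0 on an open set containing the closed ball of radius Δ_D centered at x⁰, then ‖P_D ∇f(x⁰)‖ ≤ (1/2) · L_∇f · CM_D(D)⁻¹ · Δ_D, where P_D denotes the orthogonal projection onto span(D). -/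
open scoped RealInnerProductSpace

noncomputable section

/-!
Each `d ∈ D` lies in the closed ball where `∇f` is `L`-Lipschitz, so the descent lemma and
`f x0 ≤ f (x0 + d)` give `-⟪g, d⟫ ≤ L/2 ‖d‖² ≤ (L Δ / 2) ‖d‖` for `g = P_D ∇f(x0)`,
since `⟪g, d⟫ = ⟪∇f(x0), d⟫` for `d ∈ span D`. Testing the cosine measure at the unit
vector `-g / ‖g‖` of `span D` then yields `cm(D) ‖g‖ ≤ L Δ / 2`. Finally `cm(D) > 0`: the
cosine measure is a minimum of a 1-Lipschitz function over the compact unit sphere of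
`span D`, and at each unit vector `u = ∑ cᵢ dᵢ` of the positive span, `1 = ∑ cᵢ ⟪u, dᵢ⟫`
forces some `⟪u, dᵢ⟫ > 0`.
-/

section DescentLemma

variable {E : Type*} [NormedAddCommGroup E] [InnerProductSpace ℝ E] [CompleteSpace E]

theorem apply_add_le_of_lipschitz_gradient {f : E → ℝ} {U : Set E} {L : ℝ}
    (hdiff : ∀ x ∈ U, DifferentiableAt ℝ f x)
    (hlip : ∀ x ∈ U, ∀ y ∈ U, ‖gradient f x - gradient f y‖ ≤ L * ‖x - y‖)
    {x d : E} (hseg : ∀ t ∈ Set.Icc (0 : ℝ) 1, x + t • d ∈ U) :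
    f (x + d) ≤ f x + ⟪gradient f x, d⟫ + L / 2 * ‖d‖ ^ 2 := by
  set φ : ℝ → ℝ := fun t =>
    f (x + t • d) - t * ⟪gradient f x, d⟫ - L / 2 * ‖d‖ ^ 2 * t ^ 2
  have hφ : ∀ t ∈ Set.Icc (0 : ℝ) 1, HasDerivAt φ
      (⟪gradient f (x + t • d), d⟫ - ⟪gradient f x, d⟫ - L * ‖d‖ ^ 2 * t) t := by
    intro t ht
    have hline : HasDerivAt (fun s : ℝ => x + s • d) d t := by
      simpa using ((hasDerivAt_id t).smul_const d).const_add x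
    have hf : HasDerivAt (fun s : ℝ => f (x + s • d)) ⟪gradient f (x + t • d), d⟫ t := by
      simpa [Function.comp_def] using
        (hdiff _ (hseg t ht)).hasGradientAt.hasFDerivAt.comp_hasDerivAt t hline
    exact ((hf.sub ((hasDerivAt_id' t).mul_const _)).sub
      ((hasDerivAt_pow 2 t).const_mul (L / 2 * ‖d‖ ^ 2))).congr_deriv (by simp; ring)
  have hanti : AntitoneOn φ (Set.Icc 0 1) := by
    refine antitoneOn_of_deriv_nonpos (convex_Icc 0 1)
      (fun t ht => (hφ t ht).continuousAt.continuousWithinAt)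
      (fun t ht => (hφ t (interior_subset ht)).differentiableAt.differentiableWithinAt) ?_
    intro t ht
    rw [interior_Icc] at ht
    have htI : t ∈ Set.Icc (0 : ℝ) 1 := Set.Ioo_subset_Icc_self ht
    rw [(hφ t htI).deriv, sub_nonpos, ← inner_sub_left]
    calc ⟪gradient f (x + t • d) - gradient f x, d⟫
        ≤ ‖gradient f (x + t • d) - gradient f x‖ * ‖d‖ := real_inner_le_norm _ _
      _ ≤ L * ‖t • d‖ * ‖d‖ := by
          gcongr
          simpa using hlip _ (hseg t htI) _ (hseg 0 (by simp))
      _ = L * ‖d‖ ^ 2 * t := by rw [norm_smul, Real.norm_of_nonneg ht.1.le]; ring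
  have h01 : φ 1 ≤ φ 0 := hanti (by simp) (by simp) zero_le_one
  simp only [φ, zero_smul, one_smul, add_zero] at h01
  linarith

end DescentLemma

section CosineMeasure

variable {E : Type*} [NormedAddCommGroup E] [InnerProductSpace ℝ E] {D : Set E}

def cosineMeasureAt (D : Set E) (u : E) : ℝ :=
  sSup ((fun d => ⟪u, d⟫ / ‖d‖) '' D)

theorem cmRel_eq_sInf_cosineMeasureAt (L : Submodule ℝ E) (D : Set E) :
    cmRel L D = sInf (cosineMeasureAt D '' {u | u ∈ L ∧ ‖u‖ = 1}) :=
  rfl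

theorem abs_inner_div_norm_le (u d : E) : |⟪u, d⟫ / ‖d‖| ≤ ‖u‖ := by
  rw [abs_div, abs_norm]
  exact div_le_of_le_mul₀ (norm_nonneg d) (norm_nonneg u) (abs_real_inner_le_norm u d)

theorem inner_div_norm_le_cosineMeasureAt {d : E} (hd : d ∈ D) (u : E) :
    ⟪u, d⟫ / ‖d‖ ≤ cosineMeasureAt D u :=
  le_csSup ⟨‖u‖, by
    rintro _ ⟨d', -, rfl⟩
    exact (le_abs_self _).trans (abs_inner_div_norm_le u d')⟩ ⟨d, hd, rfl⟩

theorem cosineMeasureAt_le (hD : D.Nonempty) {u : E} {c : ℝ}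
    (h : ∀ d ∈ D, ⟪u, d⟫ / ‖d‖ ≤ c) : cosineMeasureAt D u ≤ c :=
  csSup_le (hD.image _) (by rintro _ ⟨d, hd, rfl⟩; exact h d hd)

theorem neg_norm_le_cosineMeasureAt (hD : D.Nonempty) (u : E) : -‖u‖ ≤ cosineMeasureAt D u := by
  obtain ⟨d, hd⟩ := hD
  exact (neg_le_neg (abs_inner_div_norm_le u d)).trans
    ((neg_abs_le _).trans (inner_div_norm_le_cosineMeasureAt hd u))

theorem lipschitzWith_cosineMeasureAt (hD : D.Nonempty) :
    LipschitzWith 1 (cosineMeasureAt D) := by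
  refine LipschitzWith.of_le_add fun u v => cosineMeasureAt_le hD fun d hd => ?_
  have hv := inner_div_norm_le_cosineMeasureAt hd v
  have huv := (le_abs_self _).trans (abs_inner_div_norm_le (u - v) d)
  rw [inner_sub_left, sub_div] at huv
  rw [dist_eq_norm]
  linarith

theorem cosineMeasureAt_pos_of_mem_pspan {u : E} (hu : u ∈ pspan D) (hu0 : u ≠ 0) :
    0 < cosineMeasureAt D u := by
  obtain ⟨k, d, c, hdD, hc, hsum⟩ := hu
  have hpos : 0 < ∑ i, c i * ⟪u, d i⟫ := by
    calc 0 < ‖u‖ ^ 2 := by positivity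
      _ = ⟪u, ∑ i, c i • d i⟫ := by rw [← hsum, real_inner_self_eq_norm_sq]
      _ = ∑ i, c i * ⟪u, d i⟫ := by simp only [inner_sum, real_inner_smul_right]
  obtain ⟨i, -, hi⟩ := Finset.exists_lt_of_sum_lt (hpos.trans_eq' Finset.sum_const_zero.symm)
  have hinner : 0 < ⟪u, d i⟫ := pos_of_mul_pos_right hi (hc i)
  have hdi : d i ≠ 0 := by rintro h; simp [h] at hinner
  exact (div_pos hinner (norm_pos_iff.2 hdi)).trans_le
    (inner_div_norm_le_cosineMeasureAt (hdD i) u)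

theorem cmRel_pos (L : Submodule ℝ E) [FiniteDimensional ℝ L] (hL : L ≠ ⊥)
    (hLD : (L : Set E) ⊆ pspan D) (hD : D.Nonempty) : 0 < cmRel L D := by
  set S : Set E := {u | u ∈ L ∧ ‖u‖ = 1}
  have hS : S = Subtype.val '' Metric.sphere (0 : L) 1 := by
    ext u
    simp [S, and_comm]
  obtain ⟨b, hbL, hb0⟩ := Submodule.exists_mem_ne_zero_of_ne_bot hL
  have hSne : S.Nonempty := ⟨‖b‖⁻¹ • b, L.smul_mem _ hbL, norm_smul_inv_norm hb0⟩
  have hScompact : IsCompact S := hS ▸ (isCompact_sphere (0 : L) 1).image continuous_subtype_val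
  obtain ⟨u, huS, hmin⟩ :=
    hScompact.exists_isMinOn hSne (lipschitzWith_cosineMeasureAt hD).continuous.continuousOn
  have hleast : IsLeast (cosineMeasureAt D '' S) (cosineMeasureAt D u) :=
    ⟨Set.mem_image_of_mem _ huS, Set.forall_mem_image.2 (isMinOn_iff.1 hmin)⟩
  obtain ⟨huL, hu1⟩ := huS
  rw [cmRel_eq_sInf_cosineMeasureAt, hleast.csInf_eq]
  exact cosineMeasureAt_pos_of_mem_pspan (hLD huL) (norm_ne_zero_iff.1 (hu1 ▸ one_ne_zero))

theorem cmRel_mul_norm_le {L : Submodule ℝ E} (hD : D.Nonempty) {g : E} (hg : g ∈ L) {c : ℝ}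
    (hc : 0 ≤ c) (h : ∀ d ∈ D, -⟪g, d⟫ ≤ c * ‖d‖) : cmRel L D * ‖g‖ ≤ c := by
  rcases eq_or_ne g 0 with rfl | hg0
  · simpa using hc
  have hgpos : 0 < ‖g‖ := norm_pos_iff.2 hg0
  set u := -(‖g‖⁻¹ • g)
  have hu : u ∈ L ∧ ‖u‖ = 1 :=
    ⟨L.neg_mem (L.smul_mem _ hg), by rw [norm_neg]; exact norm_smul_inv_norm hg0⟩
  have hbdd : BddBelow (cosineMeasureAt D '' {u | u ∈ L ∧ ‖u‖ = 1}) :=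
    ⟨-1, by rintro _ ⟨v, ⟨-, hv⟩, rfl⟩; simpa [hv] using neg_norm_le_cosineMeasureAt hD v⟩
  have hcu : cosineMeasureAt D u ≤ ‖g‖⁻¹ * c := by
    refine cosineMeasureAt_le hD fun d hd => ?_
    have hgd : -⟪g, d⟫ / ‖d‖ ≤ c :=
      div_le_of_le_mul₀ (norm_nonneg d) hc (by linarith [h d hd])
    calc ⟪u, d⟫ / ‖d‖ = ‖g‖⁻¹ * (-⟪g, d⟫ / ‖d‖) := by
          simp only [u, inner_neg_left, real_inner_smul_left]; ring
      _ ≤ ‖g‖⁻¹ * c := by gcongr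
  calc cmRel L D * ‖g‖ ≤ ‖g‖⁻¹ * c * ‖g‖ := by
        gcongr
        exact (csInf_le hbdd ⟨u, hu, rfl⟩).trans hcu
    _ = c := by field_simp

end CosineMeasure

theorem stmt17_general {n : ℕ} (D : Set (EuclideanSpace ℝ (Fin n))) (hne : D.Nonempty)
    (h0 : (0 : EuclideanSpace ℝ (Fin n)) ∉ D)
    (Δ : ℝ) (hbdd : BddAbove (norm '' D)) (hΔ : Δ = sSup (norm '' D))
    (hps : pspan D = (Submodule.span ℝ D : Set (EuclideanSpace ℝ (Fin n))))
    (f : EuclideanSpace ℝ (Fin n) → ℝ) (x0 : EuclideanSpace ℝ (Fin n))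
    (hdec : ∀ d ∈ D, f x0 ≤ f (x0 + d))
    (U : Set (EuclideanSpace ℝ (Fin n))) (hball : Metric.closedBall x0 Δ ⊆ U)
    (L : ℝ) (hL : 0 ≤ L)
    (hdiff : ∀ x ∈ U, DifferentiableAt ℝ f x)
    (hlip : ∀ x ∈ U, ∀ y ∈ U, ‖gradient f x - gradient f y‖ ≤ L * ‖x - y‖) :
    ‖(Submodule.orthogonalProjection (Submodule.span ℝ D) (gradient f x0) :
        EuclideanSpace ℝ (Fin n))‖ ≤
      (1 / 2) * L * (cmRel (Submodule.span ℝ D) D)⁻¹ * Δ := by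
  set K := Submodule.span ℝ D
  set g : EuclideanSpace ℝ (Fin n) := ↑(K.orthogonalProjectionOnto (gradient f x0))
  have hnorm_le : ∀ d ∈ D, ‖d‖ ≤ Δ := fun d hd => hΔ ▸ le_csSup hbdd ⟨d, hd, rfl⟩
  have hΔ0 : 0 ≤ Δ := (norm_nonneg _).trans (hnorm_le _ hne.some_mem)
  have hdescent : ∀ d ∈ D, -⟪g, d⟫ ≤ L / 2 * Δ * ‖d‖ := by
    intro d hd
    have hseg : ∀ t ∈ Set.Icc (0 : ℝ) 1, x0 + t • d ∈ U := fun t ht => hball <| by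
      rw [Metric.mem_closedBall, dist_eq_norm, add_sub_cancel_left, norm_smul,
        Real.norm_of_nonneg ht.1]
      nlinarith [ht.2, norm_nonneg d, hnorm_le d hd]
    have hproj : ⟪g, d⟫ = ⟪gradient f x0, d⟫ :=
      K.inner_orthogonalProjectionOnto_eq_of_mem_right ⟨d, Submodule.subset_span hd⟩ _
    have hsq : L / 2 * ‖d‖ ^ 2 ≤ L / 2 * Δ * ‖d‖ := by
      rw [sq, ← mul_assoc, mul_right_comm]
      gcongr
      exact hnorm_le d hd
    linarith [apply_add_le_of_lipschitz_gradient hdiff hlip hseg, hdec d hd]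
  have hK : K ≠ ⊥ := fun h => h0 (Submodule.span_eq_bot.1 h _ hne.some_mem ▸ hne.some_mem)
  have hcm : 0 < cmRel K D := cmRel_pos K hK hps.ge hne
  have hbound := cmRel_mul_norm_le hne (K.orthogonalProjectionOnto (gradient f x0)).2
    (by positivity) hdescent
  rw [show 1 / 2 * L * (cmRel K D)⁻¹ * Δ = L / 2 * Δ / cmRel K D by ring, le_div_iff₀ hcm]
  linarith

theorem stmt17 {n : ℕ} (D : Set (EuclideanSpace ℝ (Fin n))) (hne : D.Nonempty)
    (h0 : (0 : EuclideanSpace ℝ (Fin n)) ∉ D)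
    (Δ : ℝ) (hbdd : BddAbove (norm '' D)) (hΔ : Δ = sSup (norm '' D)) (hΔpos : 0 < Δ)
    (hps : pspan D = (Submodule.span ℝ D : Set (EuclideanSpace ℝ (Fin n))))
    (f : EuclideanSpace ℝ (Fin n) → ℝ) (x0 : EuclideanSpace ℝ (Fin n))
    (hdec : ∀ d ∈ D, f x0 ≤ f (x0 + d))
    (U : Set (EuclideanSpace ℝ (Fin n))) (hU : IsOpen U)
    (hball : Metric.closedBall x0 Δ ⊆ U)
    (L : ℝ) (hL : 0 ≤ L)
    (hdiff : ∀ x ∈ U, DifferentiableAt ℝ f x)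
    (hlip : ∀ x ∈ U, ∀ y ∈ U, ‖gradient f x - gradient f y‖ ≤ L * ‖x - y‖) :
    ‖(Submodule.orthogonalProjection (Submodule.span ℝ D) (gradient f x0) :
        EuclideanSpace ℝ (Fin n))‖ ≤
      (1 / 2) * L * (cmRel (Submodule.span ℝ D) D)⁻¹ * Δ :=
  stmt17_general D hne h0 Δ hbdd hΔ hps f x0 hdec U hball L hL hdiff hlip
end
end

section
/- Let D ⊆ ℝⁿ be a nonempty finite set of nonzero vectors with pspan(D) = span(D), and let u ∈ cV_D(D). Then span(A_D(D, u)) = span(D), where A_D(D, u) = {d ∈ D : ⟨u, d⟩/‖d‖ = CM_D(D)} is the active set for D at u relative to span(D). -/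
open scoped RealInnerProductSpace

noncomputable section

/-!
If the active set `A` of `u ∈ cV(D)` spanned a proper subspace of `L = span D`, pick
`w ∈ L`, `w ≠ 0`, orthogonal to `A` with `⟪u, w⟫ ≥ 0`. Moving `u` to `u + t w` leaves
`⟪·, d⟫` unchanged for `d ∈ A` and, for small `t > 0`, keeps every other cosine below
`γ = cm(D)`, while the norm grows past `1`. Since `γ > 0` (because `u ∈ pspan D`),
renormalising strictly lowers all cosines below `γ`, contradicting minimality of `u`.
-/

open Filter Topology

namespace CosineMeasure

variable {E : Type*} [NormedAddCommGroup E] [InnerProductSpace ℝ E]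

/-- `cmRel L D` is the infimum of `cosMax D` over the unit vectors of `L`. -/
def cosMax (D : Set E) (u : E) : ℝ :=
  sSup ((fun d => ⟪u, d⟫ / ‖d‖) '' D)

def activeSet (L : Submodule ℝ E) (D : Set E) (u : E) : Set E :=
  {d ∈ D | ⟪u, d⟫ / ‖d‖ = cmRel L D}

lemma div_norm_le_cosMax {D : Set E} (hfin : D.Finite) (u : E) {d : E} (hd : d ∈ D) :
    ⟪u, d⟫ / ‖d‖ ≤ cosMax D u :=
  le_csSup (hfin.image _).bddAbove ⟨d, hd, rfl⟩

lemma cosMax_lt_iff {D : Set E} (hfin : D.Finite) (hne : D.Nonempty) (u : E) {γ : ℝ} :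
    cosMax D u < γ ↔ ∀ d ∈ D, ⟪u, d⟫ / ‖d‖ < γ := by
  simp [cosMax, (hfin.image _).csSup_lt_iff (hne.image _)]

lemma neg_one_le_inner_div_norm {v : E} (hv : ‖v‖ = 1) (d : E) : -1 ≤ ⟪v, d⟫ / ‖d‖ := by
  rcases eq_or_ne d 0 with rfl | hd
  · simp
  rw [le_div_iff₀ (norm_pos_iff.mpr hd)]
  have hcs := abs_real_inner_le_norm v d
  rw [hv, one_mul] at hcs
  linarith [neg_abs_le ⟪v, d⟫]

lemma cmRel_le_cosMax {L : Submodule ℝ E} {D : Set E} (hfin : D.Finite) (hne : D.Nonempty)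
    {v : E} (hvL : v ∈ L) (hv : ‖v‖ = 1) : cmRel L D ≤ cosMax D v := by
  refine csInf_le ⟨-1, ?_⟩ ⟨v, ⟨hvL, hv⟩, rfl⟩
  rintro _ ⟨v', ⟨-, hv'⟩, rfl⟩
  obtain ⟨d, hd⟩ := hne
  exact (neg_one_le_inner_div_norm hv' d).trans (div_norm_le_cosMax hfin v' hd)

lemma exists_inner_pos_of_mem_pspan {D : Set E} {u : E} (hu : u ∈ pspan D) (hu0 : u ≠ 0) :
    ∃ d ∈ D, 0 < ⟪u, d⟫ := by
  obtain ⟨k, d, c, hdD, hc, hud⟩ := hu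
  have hsum : ∑ _i : Fin k, (0 : ℝ) < ∑ i, c i * ⟪u, d i⟫ :=
    calc ∑ _i : Fin k, (0 : ℝ) = 0 := Finset.sum_const_zero
      _ < ⟪u, u⟫ := real_inner_self_pos.mpr hu0
      _ = ∑ i, c i * ⟪u, d i⟫ := by
        nth_rewrite 2 [hud]; simp only [inner_sum, real_inner_smul_right]
  obtain ⟨i, -, hi⟩ := Finset.exists_lt_of_sum_lt hsum
  exact ⟨d i, hdD i, pos_of_mul_pos_right hi (hc i)⟩

lemma cmRel_pos {L : Submodule ℝ E} {D : Set E} (hfin : D.Finite) {u : E}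
    (hu : u ∈ cVRel L D) (hup : u ∈ pspan D) : 0 < cmRel L D := by
  obtain ⟨-, hu1, hmax⟩ := hu
  obtain ⟨d, hd, hpos⟩ := exists_inner_pos_of_mem_pspan hup (norm_ne_zero_iff.mp (by simp [hu1]))
  have hd0 : d ≠ 0 := by rintro rfl; simp at hpos
  calc 0 < ⟪u, d⟫ / ‖d‖ := div_pos hpos (norm_pos_iff.mpr hd0)
    _ ≤ cosMax D u := div_norm_le_cosMax hfin u hd
    _ = cmRel L D := hmax

lemma one_lt_norm_add_smul {u w : E} (hu : ‖u‖ = 1) (hw : w ≠ 0) (huw : 0 ≤ ⟪u, w⟫) {t : ℝ}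
    (ht : 0 < t) : 1 < ‖u + t • w‖ := by
  have hsq : 1 < ‖u + t • w‖ ^ 2 := by
    rw [norm_add_sq_real, real_inner_smul_right, norm_smul, Real.norm_of_nonneg ht.le, hu]
    nlinarith [mul_nonneg ht.le huw, mul_pos (pow_pos ht 2) (pow_pos (norm_pos_iff.mpr hw) 2)]
  nlinarith [norm_nonneg (u + t • w)]

/-- Active cosines do not move since `w ⟂ d`; inactive ones have slack below `γ`. -/
lemma eventually_inner_add_smul_div_norm_le {D : Set E} (hfin : D.Finite) {u w : E} {γ : ℝ}
    (hle : ∀ d ∈ D, ⟪u, d⟫ / ‖d‖ ≤ γ) (hw : ∀ d ∈ D, ⟪u, d⟫ / ‖d‖ = γ → ⟪w, d⟫ = 0) :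
    ∀ᶠ t in 𝓝 (0 : ℝ), ∀ d ∈ D, ⟪u + t • w, d⟫ / ‖d‖ ≤ γ := by
  refine hfin.eventually_all.mpr fun d hd => ?_
  have hlin : ∀ t : ℝ, ⟪u + t • w, d⟫ / ‖d‖ = ⟪u, d⟫ / ‖d‖ + t * (⟪w, d⟫ / ‖d‖) := fun t => by
    rw [inner_add_left, real_inner_smul_left, add_div, mul_div_assoc]
  rcases (hle d hd).eq_or_lt with hact | hlt
  · exact Eventually.of_forall fun t => by simp [hlin, hw d hd hact, hact]
  · have hcont : Continuous fun t : ℝ => ⟪u + t • w, d⟫ / ‖d‖ := by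
      simp only [hlin]; fun_prop
    exact ((hcont.tendsto 0).eventually (eventually_lt_nhds (by simpa using hlt))).mono
      fun t ht => ht.le

lemma eq_zero_of_orthogonal_activeSet {L : Submodule ℝ E} {D : Set E} (hfin : D.Finite)
    (hne : D.Nonempty) {u w : E} (hu : u ∈ cVRel L D) (hγ : 0 < cmRel L D) (hwL : w ∈ L)
    (hwA : ∀ d ∈ activeSet L D u, ⟪w, d⟫ = 0) (huw : 0 ≤ ⟪u, w⟫) : w = 0 := by
  by_contra hw0
  obtain ⟨huL, hu1, hmax⟩ := hu
  have hle : ∀ d ∈ D, ⟪u, d⟫ / ‖d‖ ≤ cmRel L D := fun d hd =>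
    (div_norm_le_cosMax hfin u hd).trans_eq hmax
  obtain ⟨t, htD, ht⟩ :=
    (((eventually_inner_add_smul_div_norm_le hfin hle fun d hd hact => hwA d ⟨hd, hact⟩).filter_mono
      nhdsWithin_le_nhds).and (self_mem_nhdsWithin (s := Set.Ioi 0))).exists
  set v := u + t • w
  have hv1 : 1 < ‖v‖ := one_lt_norm_add_smul hu1 hw0 huw ht
  have hv0 : 0 < ‖v‖ := one_pos.trans hv1
  have hvL : ‖v‖⁻¹ • v ∈ L := L.smul_mem _ (L.add_mem huL (L.smul_mem _ hwL))
  have hvn : ‖‖v‖⁻¹ • v‖ = 1 := by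
    rw [norm_smul, norm_inv, norm_norm, inv_mul_cancel₀ hv0.ne']
  refine (cmRel_le_cosMax hfin hne hvL hvn).not_gt ((cosMax_lt_iff hfin hne _).mpr fun d hd => ?_)
  calc ⟪‖v‖⁻¹ • v, d⟫ / ‖d‖ = (⟪v, d⟫ / ‖d‖) / ‖v‖ := by
        rw [real_inner_smul_left]; ring
    _ ≤ cmRel L D / ‖v‖ := by gcongr; exact htD d hd
    _ < cmRel L D := div_lt_self hγ hv1

lemma exists_mem_orthogonal_inf_ne_zero {K L : Submodule ℝ E} [K.HasOrthogonalProjection]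
    (hKL : K < L) : ∃ w ∈ L, w ∈ Kᗮ ∧ w ≠ 0 := by
  have hne : Kᗮ ⊓ L ≠ ⊥ := by
    intro h
    have hsup := Submodule.sup_orthogonal_inf_of_hasOrthogonalProjection hKL.le
    rw [h, sup_bot_eq] at hsup
    exact hKL.ne hsup
  obtain ⟨w, ⟨hwK, hwL⟩, hw0⟩ := Submodule.exists_mem_ne_zero_of_ne_bot hne
  exact ⟨w, hwL, hwK, hw0⟩

theorem span_activeSet_eq {D : Set E} (hne : D.Nonempty) (hfin : D.Finite)
    (hps : pspan D = (Submodule.span ℝ D : Set E)) {u : E}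
    (hu : u ∈ cVRel (Submodule.span ℝ D) D) :
    Submodule.span ℝ (activeSet (Submodule.span ℝ D) D u) = Submodule.span ℝ D := by
  set L := Submodule.span ℝ D
  set K := Submodule.span ℝ (activeSet L D u)
  have hKL : K ≤ L := Submodule.span_mono fun d hd => hd.1
  have : FiniteDimensional ℝ K := FiniteDimensional.span_of_finite ℝ (hfin.subset fun d hd => hd.1)
  by_contra hKL'
  obtain ⟨w, hwL, hwK, hw0⟩ := exists_mem_orthogonal_inf_ne_zero (hKL.lt_of_ne hKL')
  have hγ : 0 < cmRel L D := cmRel_pos hfin hu (hps ▸ hu.1)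
  have hwA : ∀ d ∈ activeSet L D u, ⟪w, d⟫ = 0 := fun d hd =>
    (Submodule.mem_orthogonal' K w).mp hwK d (Submodule.subset_span hd)
  rcases le_total 0 ⟪u, w⟫ with huw | huw
  · exact hw0 (eq_zero_of_orthogonal_activeSet hfin hne hu hγ hwL hwA huw)
  · refine hw0 (neg_eq_zero.mp (eq_zero_of_orthogonal_activeSet hfin hne hu hγ (L.neg_mem hwL)
      (fun d hd => by rw [inner_neg_left, hwA d hd, neg_zero]) ?_))
    rwa [inner_neg_right, neg_nonneg]

end CosineMeasure

theorem stmt19_general {n : ℕ} (D : Set (EuclideanSpace ℝ (Fin n))) (hne : D.Nonempty)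
    (hfin : D.Finite)
    (hps : pspan D = (Submodule.span ℝ D : Set (EuclideanSpace ℝ (Fin n))))
    (u : EuclideanSpace ℝ (Fin n)) (hu : u ∈ cVRel (Submodule.span ℝ D) D) :
    Submodule.span ℝ
        {d ∈ D | ⟪u, d⟫ / ‖d‖ = cmRel (Submodule.span ℝ D) D} =
      Submodule.span ℝ D :=
  CosineMeasure.span_activeSet_eq hne hfin hps hu

theorem stmt19 {n : ℕ} (D : Set (EuclideanSpace ℝ (Fin n))) (hne : D.Nonempty)
    (hfin : D.Finite) (h0 : (0 : EuclideanSpace ℝ (Fin n)) ∉ D)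
    (hps : pspan D = (Submodule.span ℝ D : Set (EuclideanSpace ℝ (Fin n))))
    (u : EuclideanSpace ℝ (Fin n)) (hu : u ∈ cVRel (Submodule.span ℝ D) D) :
    Submodule.span ℝ
        {d ∈ D | ⟪u, d⟫ / ‖d‖ = cmRel (Submodule.span ℝ D) D} =
      Submodule.span ℝ D :=
  stmt19_general D hne hfin hps u hu
end
end
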